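/- arXiv:1605.08742 — 2 statements merged into one kernel-verified Lean document; each statement's English description precedes it below -/
import Mathlib

section
/- Let A ∈ ℤ^{m×n} with rank(A) = m, let b ∈ ℤ^m, and let r be the dimension of the lineality space R = C(A) ∩ (−C(A)) of the cone C(A), with r < m. Assume the system (F) has a solution, i.e. there exists x* ∈ ℤ^n with x* ≥ 0 and Ax* = b. Then no matrix T ∈ ℚ^{k×m} with k ≤ r is a strong aggregation matrix for (F); hence a strong aggregation matrix of size r + 1 has minimum size. -/
/-
Let `L = ker T ⊆ ℝᵐ`, so `dim L ≥ m - k ≥ m - r`. Either `L` meets the lineality space `R`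
nontrivially, or `L + R = ℝᵐ`; in the second case a column `c` of `A` outside `R` (one exists
since `rank A = m > r`) splits as `c = l + ρ` with `ρ ∈ R`, and `l = c + (-ρ)` is a nonzero point
of `C(A) ∩ L`. Either way some real `x ≥ 0` has `TAx = 0` and `Ax ≠ 0`. As `T` and `A` are
rational, the real kernel of `TA` is spanned by rational vectors, so `x` can be approximated by a
rational, and after scaling integral, `z ≥ 0` with `TAz = 0` and `Az ≠ 0`. Then `x* + z` solves
the aggregated system but not `Ax = b`.
-/

open Module Matrix Topology Filter

variable {κ ι μ : Type*}

theorem exists_ne_zero_mem_of_finrank_le {K V : Type*} [Field K] [AddCommGroup V] [Module K V]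
    [FiniteDimensional K V] {C : Set V} (hadd : ∀ u ∈ C, ∀ w ∈ C, u + w ∈ C)
    {L R : Submodule K V} (hRC : (R : Set V) ⊆ C) {c : V} (hc : c ∈ C) (hcR : c ∉ R)
    (hdim : finrank K V ≤ finrank K L + finrank K R) :
    ∃ v ∈ C, v ∈ L ∧ v ≠ 0 := by
  by_cases hLR : L ⊓ R = ⊥
  · have htop : L ⊔ R = ⊤ := by
      apply Submodule.eq_top_of_finrank_eq
      have := Submodule.finrank_sup_add_finrank_inf_eq L R
      rw [hLR, finrank_bot] at this
      exact le_antisymm (Submodule.finrank_le _) (by omega)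
    obtain ⟨l, hl, ρ, hρ, rfl⟩ := Submodule.mem_sup.1 (htop ▸ Submodule.mem_top : c ∈ L ⊔ R)
    refine ⟨l, ?_, hl, ?_⟩
    · simpa using hadd _ hc _ (hRC (R.neg_mem hρ))
    · rintro rfl
      exact hcR (by simpa using hρ)
  · obtain ⟨v, ⟨hvL, hvR⟩, hv0⟩ := (Submodule.ne_bot_iff _).1 hLR
    exact ⟨v, hRC hvR, hvL, hv0⟩

namespace Matrix

def mulVecCone {R : Type*} [Semiring R] [PartialOrder R] [Fintype ι] (M : Matrix κ ι R) :
    Set (κ → R) :=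
  {v | ∃ x, 0 ≤ x ∧ v = M *ᵥ x}

section mulVecCone

variable {R : Type*} [Semiring R] [PartialOrder R] [IsOrderedRing R] [Fintype ι]
  (M : Matrix κ ι R)

theorem add_mem_mulVecCone : ∀ u ∈ M.mulVecCone, ∀ w ∈ M.mulVecCone, u + w ∈ M.mulVecCone := by
  rintro _ ⟨x, hx, rfl⟩ _ ⟨y, hy, rfl⟩
  exact ⟨x + y, add_nonneg hx hy, (mulVec_add M x y).symm⟩

theorem col_mem_mulVecCone [DecidableEq ι] (j : ι) : M.col j ∈ M.mulVecCone :=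
  ⟨Pi.single j 1, Pi.single_nonneg.2 zero_le_one, (mulVec_single_one M j).symm⟩

end mulVecCone

section FiniteDimensional

variable {K : Type*} [Field K] [Fintype κ] [Fintype ι] (M : Matrix κ ι K)

theorem exists_col_notMem_of_finrank_lt {W : Submodule K (κ → K)} (h : finrank K W < M.rank) :
    ∃ j, M.col j ∉ W := by
  by_contra! hcol
  have hle : LinearMap.range M.mulVecLin ≤ W := by
    rw [range_mulVecLin, Submodule.span_le]
    rintro _ ⟨j, rfl⟩
    exact hcol j
  exact (Submodule.finrank_mono hle).not_gt h

theorem card_le_finrank_ker_add_card :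
    Fintype.card ι ≤ finrank K (LinearMap.ker M.mulVecLin) + Fintype.card κ := by
  have := LinearMap.finrank_range_add_finrank_ker M.mulVecLin
  have := M.rank_le_card_height
  rw [finrank_fintype_fun_eq_card] at *
  unfold Matrix.rank at *
  omega

end FiniteDimensional

theorem map_mulVec_comp {R S : Type*} [NonAssocSemiring R] [NonAssocSemiring S] [Fintype ι]
    (f : R →+* S) (M : Matrix κ ι R) (v : ι → R) : M.map f *ᵥ (f ∘ v) = f ∘ (M *ᵥ v) :=
  funext fun i => (f.map_mulVec M v i).symm

end Matrix

section BaseChange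

variable {K L : Type*} [Field K] [Field L] [Algebra K L]

theorem Submodule.finrank_le_finrank_span_image_algebraMap [Finite ι] (W : Submodule K (ι → K)) :
    finrank K W ≤ finrank L (span L ((algebraMap K L ∘ ·) '' (W : Set (ι → K)))) := by
  let b := finBasis K W
  have hind : LinearIndependent L fun i => algebraMap K L ∘ (W.subtype ∘ b) i :=
    linearIndependent_algebraMap_comp_iff.2 (b.linearIndependent.map' W.subtype (ker_subtype _))
  have hle : span L (Set.range fun i => algebraMap K L ∘ (W.subtype ∘ b) i) ≤
      span L ((algebraMap K L ∘ ·) '' (W : Set (ι → K))) := by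
    apply span_mono
    rintro _ ⟨i, rfl⟩
    exact ⟨b i, (b i).2, rfl⟩
  have := finrank_mono hle
  rwa [finrank_span_eq_card hind, Fintype.card_fin] at this

namespace Matrix

variable [Fintype κ] [Fintype ι] (M : Matrix κ ι K)

theorem rank_le_rank_map_algebraMap : M.rank ≤ (M.map (algebraMap K L)).rank := by
  refine (LinearMap.range M.mulVecLin).finrank_le_finrank_span_image_algebraMap.trans
    (Submodule.finrank_mono (Submodule.span_le.2 ?_))
  rintro _ ⟨_, ⟨u, rfl⟩, rfl⟩
  exact ⟨algebraMap K L ∘ u, map_mulVec_comp _ M u⟩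

theorem span_image_algebraMap_ker :
    Submodule.span L ((algebraMap K L ∘ ·) '' (LinearMap.ker M.mulVecLin : Set (ι → K))) =
      LinearMap.ker (M.map (algebraMap K L)).mulVecLin := by
  apply Submodule.eq_of_le_of_finrank_le
  · rw [Submodule.span_le]
    rintro _ ⟨y, hy, rfl⟩
    have hy : M *ᵥ y = 0 := hy
    simp [LinearMap.mem_ker, map_mulVec_comp, hy]
  · have hspan := (LinearMap.ker M.mulVecLin).finrank_le_finrank_span_image_algebraMap (L := L)
    have hK := LinearMap.finrank_range_add_finrank_ker M.mulVecLin
    have hL := LinearMap.finrank_range_add_finrank_ker (M.map (algebraMap K L)).mulVecLin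
    have hrank := M.rank_le_rank_map_algebraMap (L := L)
    rw [finrank_fintype_fun_eq_card] at hK hL
    unfold Matrix.rank at hrank
    omega

end Matrix

end BaseChange

theorem Rat.exists_nat_mul_eq_intCast [Fintype ι] (y : ι → ℚ) :
    ∃ N : ℕ, 0 < N ∧ ∃ z : ι → ℤ, ∀ i, (z i : ℚ) = N * y i := by
  refine ⟨∏ i, (y i).den, Finset.prod_pos fun i _ => (y i).pos, ?_⟩
  have hz : ∀ i, ∃ t : ℤ, (t : ℚ) = (∏ i, (y i).den : ℕ) * y i := by
    intro i
    obtain ⟨t, ht⟩ := Finset.dvd_prod_of_mem (fun i => (y i).den) (Finset.mem_univ i)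
    refine ⟨t * (y i).num, ?_⟩
    rw [ht]
    push_cast
    rw [← Rat.mul_den_eq_num]
    ring
  choose z hz using hz
  exact ⟨z, hz⟩

namespace Matrix

variable [Fintype κ] [Fintype ι]

theorem mem_closure_image_ratCast_ker (M : Matrix κ ι ℚ) {x : ι → ℝ}
    (hx : M.map (algebraMap ℚ ℝ) *ᵥ x = 0) :
    x ∈ closure ((algebraMap ℚ ℝ ∘ ·) '' (LinearMap.ker M.mulVecLin : Set (ι → ℚ))) := by
  have hspan : x ∈ Submodule.span ℝ
      ((algebraMap ℚ ℝ ∘ ·) '' (LinearMap.ker M.mulVecLin : Set (ι → ℚ))) := by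
    rwa [M.span_image_algebraMap_ker]
  obtain ⟨d, c, w, rfl⟩ := Submodule.mem_span_set'.1 hspan
  choose y hy hyw using fun i => (w i).2
  let F : (Fin d → ℝ) → ι → ℝ := fun c => ∑ i, c i • (w i : ι → ℝ)
  have hdense : DenseRange (algebraMap ℚ ℝ ∘ · : (Fin d → ℚ) → Fin d → ℝ) :=
    DenseRange.piMap fun _ => Rat.denseRange_cast
  have hc : F c ∈ closure (F '' Set.range (algebraMap ℚ ℝ ∘ · : (Fin d → ℚ) → Fin d → ℝ)) :=
    mem_closure_image (by fun_prop) (hdense.closure_range ▸ Set.mem_univ c)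
  refine closure_mono ?_ hc
  rintro _ ⟨_, ⟨q, rfl⟩, rfl⟩
  refine ⟨∑ i, q i • y i, Submodule.sum_mem _ fun i _ => Submodule.smul_mem _ _ (hy i), ?_⟩
  ext j
  simp [F, ← hyw]

theorem exists_rat_nonneg_mulVec_eq_zero (M : Matrix κ ι ℚ) (P : Matrix μ ι ℚ) {x : ι → ℝ}
    (hx : 0 ≤ x) (hMx : M.map (algebraMap ℚ ℝ) *ᵥ x = 0)
    (hPx : P.map (algebraMap ℚ ℝ) *ᵥ x ≠ 0) :
    ∃ y : ι → ℚ, 0 ≤ y ∧ M *ᵥ y = 0 ∧ P *ᵥ y ≠ 0 := by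
  classical
  -- The extra rows make every rational approximation vanish wherever `x` does.
  set M' : Matrix (κ ⊕ {j // x j = 0}) ι ℚ :=
    fromRows M (Matrix.of fun j => Pi.single j.1 1) with hM'
  have hM'x : M'.map (algebraMap ℚ ℝ) *ᵥ x = 0 := by
    ext (i | j)
    · simpa [hM', fromRows_map, fromRows_mulVec] using congrFun hMx i
    · simpa [hM', fromRows_map, fromRows_mulVec, mulVec, dotProduct, Pi.single_apply] using j.2
  have hev : ∀ᶠ z in 𝓝 x, (∀ j, x j ≠ 0 → 0 < z j) ∧ P.map (algebraMap ℚ ℝ) *ᵥ z ≠ 0 := by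
    refine (eventually_all.2 fun j => ?_).and
      ((Continuous.continuousAt (by fun_prop)).eventually_ne hPx)
    by_cases hj : x j = 0
    · simp [hj]
    · filter_upwards [(continuous_apply j).continuousAt.eventually
        (lt_mem_nhds ((hx j).lt_of_ne' hj))] with z hz using fun _ => hz
  obtain ⟨_, ⟨y, hy, rfl⟩, hpos, hPy⟩ :=
    ((mem_closure_iff_frequently.1 (M'.mem_closure_image_ratCast_ker hM'x)).and_eventually
      hev).exists
  have hy : M' *ᵥ y = 0 := hy
  refine ⟨y, fun j => ?_, ?_, ?_⟩
  · by_cases hj : x j = 0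
    · simpa [hM', fromRows_mulVec, mulVec] using (congrFun hy (Sum.inr ⟨j, hj⟩)).ge
    · exact_mod_cast (by simpa using (hpos j hj).le : (0 : ℝ) ≤ y j)
  · ext i
    simpa [hM', fromRows_mulVec] using congrFun hy (Sum.inl i)
  · intro h
    exact hPy (by simp [map_mulVec_comp, h])

theorem exists_int_nonneg_mulVec_eq_zero (M : Matrix κ ι ℚ) (P : Matrix μ ι ℤ) {x : ι → ℝ}
    (hx : 0 ≤ x) (hMx : M.map (algebraMap ℚ ℝ) *ᵥ x = 0)
    (hPx : P.map (Int.cast : ℤ → ℝ) *ᵥ x ≠ 0) :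
    ∃ z : ι → ℤ, 0 ≤ z ∧ M *ᵥ (fun j => (z j : ℚ)) = 0 ∧ P *ᵥ z ≠ 0 := by
  obtain ⟨y, hy, hMy, hPy⟩ := M.exists_rat_nonneg_mulVec_eq_zero (P.map (Int.cast : ℤ → ℚ)) hx
    hMx (by simpa [Matrix.map_map, Function.comp_def] using hPx)
  obtain ⟨N, hN, z, hz⟩ := Rat.exists_nat_mul_eq_intCast y
  have hzy : (fun j => (z j : ℚ)) = (N : ℚ) • y := funext fun j => by simp [hz]
  refine ⟨z, fun j => ?_, ?_, fun hPz => hPy ?_⟩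
  · have : (0 : ℚ) ≤ z j := hz j ▸ mul_nonneg (Nat.cast_nonneg N) (hy j)
    exact_mod_cast this
  · rw [hzy, mulVec_smul, hMy, smul_zero]
  · have hcast := map_mulVec_comp (Int.castRingHom ℚ) P z
    rw [hPz] at hcast
    have : (N : ℚ) • (P.map (Int.cast : ℤ → ℚ) *ᵥ y) = 0 := by
      rw [← mulVec_smul, ← hzy]
      ext i
      simpa [Function.comp_def] using congrFun hcast i
    exact (smul_eq_zero.1 this).resolve_left (Nat.cast_ne_zero.2 hN.ne')

theorem setOf_mulVec_eq_ne_of_mulVec_eq_zero (A : Matrix κ ι ℤ) (T : Matrix μ κ ℚ)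
    {xs z : ι → ℤ} (hxs : 0 ≤ xs) (hz : 0 ≤ z)
    (hTAz : (T * A.map (Int.cast : ℤ → ℚ)) *ᵥ (fun j => (z j : ℚ)) = 0) (hAz : A *ᵥ z ≠ 0) :
    {x : ι → ℤ | 0 ≤ x ∧ A *ᵥ x = A *ᵥ xs} ≠
      {x : ι → ℤ | 0 ≤ x ∧ (T * A.map (Int.cast : ℤ → ℚ)) *ᵥ (fun j => (x j : ℚ)) =
        T *ᵥ (fun i => ((A *ᵥ xs) i : ℚ))} := by
  intro h
  have hmem : xs + z ∈ {x : ι → ℤ | 0 ≤ x ∧ (T * A.map (Int.cast : ℤ → ℚ)) *ᵥ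
      (fun j => (x j : ℚ)) = T *ᵥ (fun i => ((A *ᵥ xs) i : ℚ))} := by
    refine ⟨add_nonneg hxs hz, ?_⟩
    have hsplit : (fun j => ((xs + z) j : ℚ)) = (fun j => (xs j : ℚ)) + fun j => (z j : ℚ) := by
      ext; simp
    rw [hsplit, mulVec_add, hTAz, add_zero, ← mulVec_mulVec]
    exact congrArg _ (map_mulVec_comp (Int.castRingHom ℚ) A xs)
  rw [← h] at hmem
  have hAxz := hmem.2
  rw [mulVec_add, add_eq_left] at hAxz
  exact hAz hAxz

end Matrix

/-- Theorem `minsize` (optimality part): for `A` of full row rank `m` with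
`r = dim(C(A) ∩ (-C(A))) < m`, if the system `(F)` is feasible then no matrix
`T ∈ ℚ^{k×m}` with `k ≤ r` is a strong aggregation matrix for `(F)`. -/
theorem stmt_13 (m n : ℕ) (A : Matrix (Fin m) (Fin n) ℤ) (b : Fin m → ℤ)
    (hrank : (A.map (Int.cast : ℤ → ℝ)).rank = m)
    (C : Set (Fin m → ℝ))
    (hC : C = {v | ∃ x : Fin n → ℝ, 0 ≤ x ∧ v = (A.map (Int.cast : ℤ → ℝ)).mulVec x})
    (R : Submodule ℝ (Fin m → ℝ))
    (hR : (R : Set (Fin m → ℝ)) = {v | v ∈ C ∧ -v ∈ C})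
    (r : ℕ) (hr : r = Module.finrank ℝ R) (hrm : r < m)
    (hfeas : ∃ x : Fin n → ℤ, 0 ≤ x ∧ A.mulVec x = b) :
    ∀ k : ℕ, k ≤ r → ∀ T : Matrix (Fin k) (Fin m) ℚ,
      {x : Fin n → ℤ | 0 ≤ x ∧ A.mulVec x = b} ≠
        {x : Fin n → ℤ | 0 ≤ x ∧
          (T * A.map (Int.cast : ℤ → ℚ)).mulVec (fun j => (x j : ℚ)) =
            T.mulVec (fun i => (b i : ℚ))} := by
  intro k hk T
  obtain ⟨xs, hxs, rfl⟩ := hfeas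
  change C = (A.map Int.cast).mulVecCone at hC
  subst hC
  obtain ⟨j, hj⟩ := (A.map (Int.cast : ℤ → ℝ)).exists_col_notMem_of_finrank_lt (W := R) (by omega)
  have hdim : finrank ℝ (Fin m → ℝ) ≤
      finrank ℝ (LinearMap.ker (T.map (algebraMap ℚ ℝ)).mulVecLin) + finrank ℝ R := by
    have := (T.map (algebraMap ℚ ℝ)).card_le_finrank_ker_add_card
    simp only [Fintype.card_fin, finrank_fin_fun] at this ⊢
    omega
  obtain ⟨_, ⟨x, hx, rfl⟩, hTAx, hAx⟩ := exists_ne_zero_mem_of_finrank_le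
    (add_mem_mulVecCone _) (fun v hv => ((Set.ext_iff.1 hR v).1 hv).1) (col_mem_mulVecCone _ j)
    hj hdim
  have hTAx' : (T * A.map (Int.cast : ℤ → ℚ)).map (algebraMap ℚ ℝ) *ᵥ x = 0 := by
    rw [Matrix.map_mul, Matrix.map_map, ← mulVec_mulVec]
    simpa using hTAx
  obtain ⟨z, hz, hTAz, hAz⟩ := exists_int_nonneg_mulVec_eq_zero _ A hx hTAx' hAx
  exact setOf_mulVec_eq_ne_of_mulVec_eq_zero A T hxs hz hTAz hAz
end

section
/- Let A ∈ ℤ^{m×n}, b ∈ ℤ^m, let R be the lineality space of C(A) and r = dim R. Let B₁,…,B_r ∈ ℤ^m be a basis of the lattice L(A) ∩ R (i.e. every element of L(A) ∩ R is an integer linear combination of B₁,…,B_r and they are linearly independent), and set B_{r+1} = −Σ_{i=1}^{r} B_i. Let A^P be the submatrix of A consisting of the columns of A that do not belong to R. Then for every x ∈ ℤ^n with x ≥ 0 and Ax = b, there exist x^B ∈ ℤ^{r+1} with x^B ≥ 0 and x^P ∈ ℤ^{n₂} with x^P ≥ 0 (n₂ the number of columns of A^P) such that Σ_{i=1}^{r+1}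 x^B_i·B_i + A^P x^P = b. -/
/-!
Split a nonnegative solution `x` of `Ax = b` along the columns of `A`: the part supported on the
columns lying in the lineality space `R` maps to a vector of the subspace `R`, which is moreover in
`L(A)`, hence an integer combination `∑ cᵢ Bᵢ` of the lattice basis. Since `∑_{i ≤ r+1} Bᵢ = 0`,
adding `N = ∑ |cᵢ|` to every coefficient (with coefficient `N` on `B_{r+1}`) makes all of them
nonnegative without changing the sum; the remaining part of `x` is `x^P`.
-/

namespace Matrix

variable {ι κ : Type*} [Fintype κ]

def colCone (M : Matrix ι κ ℝ) : PointedCone ℝ (ι → ℝ) :=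
  (PointedCone.positive ℝ (κ → ℝ)).map M.mulVecLin

lemma coe_colCone (M : Matrix ι κ ℝ) :
    (M.colCone : Set (ι → ℝ)) = {v | ∃ x : κ → ℝ, 0 ≤ x ∧ v = M *ᵥ x} := by
  ext v
  simp [colCone, eq_comm]

lemma mulVec_indicator_mem {R : Type*} [CommSemiring R] (M : Matrix ι κ R)
    (S : Submodule R (ι → R)) (y : κ → R) :
    M *ᵥ {j | (fun i => M i j) ∈ S}.indicator y ∈ S := by
  rw [mulVec_eq_sum]
  refine S.sum_mem fun j _ => ?_
  rw [op_smul_eq_smul]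
  by_cases hj : (fun i => M i j) ∈ S
  · exact S.smul_mem _ hj
  · simp [Set.indicator_of_notMem (show j ∉ {j | (fun i => M i j) ∈ S} from hj)]

lemma intCast_comp_mulVec (A : Matrix ι κ ℤ) (z : κ → ℤ) :
    Int.cast ∘ (A *ᵥ z) = A.map (Int.cast : ℤ → ℝ) *ᵥ (Int.cast ∘ z) :=
  funext (RingHom.map_mulVec (Int.castRingHom ℝ) A z)

end Matrix

lemma exists_nonneg_sum_smul_eq_of_last_eq_neg_sum {G : Type*} [AddCommGroup G] {r : ℕ}
    (B : Fin (r + 1) → G) (hB : B (Fin.last r) = -∑ i : Fin r, B i.castSucc) (c : Fin r → ℤ) :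
    ∃ d : Fin (r + 1) → ℤ, 0 ≤ d ∧ ∑ i, d i • B i = ∑ i, c i • B i.castSucc := by
  set N := ∑ i, |c i|
  have hN : 0 ≤ N := Finset.sum_nonneg fun i _ => abs_nonneg (c i)
  refine ⟨Fin.snoc (fun i => c i + N) N, fun i => ?_, ?_⟩
  · refine Fin.lastCases ?_ (fun i => ?_) i
    · simpa using hN
    · have : |c i| ≤ N := Finset.single_le_sum (fun j _ => abs_nonneg (c j)) (Finset.mem_univ i)
      simpa using (by linarith [neg_abs_le (c i)] : 0 ≤ c i + N)
  · simp only [Fin.sum_univ_castSucc, Fin.snoc_castSucc, Fin.snoc_last, hB, add_smul,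
      Finset.sum_add_distrib, ← Finset.smul_sum, smul_neg]
    abel

theorem stmt_14_general (m n r : ℕ) (A : Matrix (Fin m) (Fin n) ℤ) (b : Fin m → ℤ)
    (C : Set (Fin m → ℝ))
    (hC : C = {v | ∃ x : Fin n → ℝ, 0 ≤ x ∧ v = (A.map (Int.cast : ℤ → ℝ)).mulVec x})
    (Rset : Set (Fin m → ℝ)) (hRset : Rset = {v | v ∈ C ∧ -v ∈ C})
    (Bv : Fin (r + 1) → Fin m → ℤ)
    (hBlast : Bv (Fin.last r) = -(∑ i : Fin r, Bv i.castSucc))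
    (hBgen : ∀ v : Fin m → ℤ, (∃ x : Fin n → ℤ, v = A.mulVec x) →
      (fun j => ((v j : ℤ) : ℝ)) ∈ Rset →
      ∃ c : Fin r → ℤ, v = ∑ i : Fin r, c i • Bv i.castSucc) :
    ∀ x : Fin n → ℤ, 0 ≤ x → A.mulVec x = b →
      ∃ (xB : Fin (r + 1) → ℤ) (xP : Fin n → ℤ), 0 ≤ xB ∧ 0 ≤ xP ∧
        (∀ j : Fin n, (fun i => ((A i j : ℤ) : ℝ)) ∈ Rset → xP j = 0) ∧
        (∑ i : Fin (r + 1), xB i • Bv i) + A.mulVec xP = b := by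
  intro x hx hAx
  set Aℝ := A.map (Int.cast : ℤ → ℝ)
  obtain rfl : Rset = Aℝ.colCone.lineal := by
    rw [hRset, hC, ← Matrix.coe_colCone]
    rfl
  set s := {j | (fun i => Aℝ i j) ∈ Aℝ.colCone.lineal}
  have hlineal : (fun j => (A.mulVec (s.indicator x) j : ℝ)) ∈ Aℝ.colCone.lineal := by
    rw [← Function.comp_def, Matrix.intCast_comp_mulVec,
      ← Set.indicator_comp_of_zero Int.cast_zero]
    exact Matrix.mulVec_indicator_mem Aℝ _ _
  obtain ⟨c, hc⟩ := hBgen _ ⟨_, rfl⟩ hlineal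
  obtain ⟨xB, hxB, hsum⟩ := exists_nonneg_sum_smul_eq_of_last_eq_neg_sum Bv hBlast c
  refine ⟨xB, sᶜ.indicator x, hxB, Set.indicator_nonneg fun j _ => hx j,
    fun j hj => Set.indicator_of_notMem (Set.notMem_compl_iff.mpr (show j ∈ s from hj)) x, ?_⟩
  rw [hsum, ← hc, ← Matrix.mulVec_add, Set.indicator_self_add_compl, hAx]

/-- Claim 1 in the proof of Theorem `minsize`: with `B₁, …, B_r` a basis of the
lattice `L(A) ∩ R` (`R` the lineality space of `C(A)`, `r = dim R`) and
`B_{r+1} = -∑ B_i`, every nonnegative integer solution of `Ax = b` yields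
nonnegative integer vectors `x^B, x^P` with `∑ x^B_i·B_i + A^P x^P = b`, where
`A^P` consists of the columns of `A` not in `R` (encoded by requiring `x^P` to
vanish on the columns of `A` belonging to `R`). -/
theorem stmt_14 (m n r : ℕ) (A : Matrix (Fin m) (Fin n) ℤ) (b : Fin m → ℤ)
    (C : Set (Fin m → ℝ))
    (hC : C = {v | ∃ x : Fin n → ℝ, 0 ≤ x ∧ v = (A.map (Int.cast : ℤ → ℝ)).mulVec x})
    (Rset : Set (Fin m → ℝ)) (hRset : Rset = {v | v ∈ C ∧ -v ∈ C})
    (hr : r = Module.finrank ℝ (Submodule.span ℝ Rset))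
    (Bv : Fin (r + 1) → Fin m → ℤ)
    (hBlast : Bv (Fin.last r) = -(∑ i : Fin r, Bv i.castSucc))
    (hBindep : LinearIndependent ℝ
      (fun (i : Fin r) (j : Fin m) => ((Bv i.castSucc j : ℤ) : ℝ)))
    (hBgen : ∀ v : Fin m → ℤ, (∃ x : Fin n → ℤ, v = A.mulVec x) →
      (fun j => ((v j : ℤ) : ℝ)) ∈ Rset →
      ∃ c : Fin r → ℤ, v = ∑ i : Fin r, c i • Bv i.castSucc) :
    ∀ x : Fin n → ℤ, 0 ≤ x → A.mulVec x = b →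
      ∃ (xB : Fin (r + 1) → ℤ) (xP : Fin n → ℤ), 0 ≤ xB ∧ 0 ≤ xP ∧
        (∀ j : Fin n, (fun i => ((A i j : ℤ) : ℝ)) ∈ Rset → xP j = 0) ∧
        (∑ i : Fin (r + 1), xB i • Bv i) + A.mulVec xP = b :=
  stmt_14_general m n r A b C hC Rset hRset Bv hBlast hBgen
end
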